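/- Let D be a finite DAG with vertices partitioned into sources S, internal vertices I, and sinks T, and let X ⊆ I be a set of pairwise false twins (all vertices in X share the same in-neighborhood and the same out-neighborhood). Then there exists a minimum-cost total elimination sequence in which the vertices of X are eliminated consecutively. -/

import Mathlib

/-!
Let `u, v ∈ X` be twins and `σ = a u m v r`. After `u` is eliminated, `v` is simplicial, so
eliminating it creates no fill; for each `w ∈ m` this makes the Markowitz degree of `w`
midpoint-concave along `E, E/u, E/u/v`. Summing over `m` (by induction, commuting eliminations)
gives `cost (a u v m r) + cost (a m u v r) ≤ 2 cost (a u m v r)`, so pulling `v` back next to `u`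
keeps an optimal sequence optimal. Among optimal sequences take one minimising the sum of the
positions of the vertices of `X`; if `X` were not consecutive, this pull would lower that sum.
-/

variable {V : Type*} [DecidableEq V] [Fintype V]

/-- In-neighborhood of `v` in the edge set `E`. -/
def inN (E : Finset (V × V)) (v : V) : Finset V :=
  (E.filter fun p => p.2 = v).image Prod.fst

/-- Out-neighborhood of `v` in the edge set `E`. -/
def outN (E : Finset (V × V)) (v : V) : Finset V :=
  (E.filter fun p => p.1 = v).image Prod.snd

/-- Elimination of vertex `v`: delete `v` and add an edge from every in-neighbor
to every out-neighbor of `v` (if not already present). -/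
def elimv (E : Finset (V × V)) (v : V) : Finset (V × V) :=
  (E ∪ (inN E v) ×ˢ (outN E v)).filter fun p => p.1 ≠ v ∧ p.2 ≠ v

/-- Eliminate a sequence of vertices, in order. -/
def elimSeq (E : Finset (V × V)) (σ : List V) : Finset (V × V) :=
  σ.foldl elimv E

/-- Markowitz degree of `v`: in-degree times out-degree. -/
def mark (E : Finset (V × V)) (v : V) : ℕ :=
  (inN E v).card * (outN E v).card

/-- Cost of an elimination sequence: sum of the Markowitz degrees at the
time of each elimination. -/
def cost (E : Finset (V × V)) : List V → ℕ
  | [] => 0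
  | v :: σ => mark E v + cost (elimv E v) σ

/-- The directed graph with edge set `E` is acyclic. -/
def Acyclic (E : Finset (V × V)) : Prop :=
  ∀ v : V, ¬ Relation.TransGen (fun a b => (a, b) ∈ E) v v

/-- `E` is an acyclic digraph whose vertices are partitioned into sources `S`
(no in-edges), internal vertices `I`, and sinks `T` (no out-edges). -/
def IsDAGPartition (E : Finset (V × V)) (S I T : Finset V) : Prop :=
  Acyclic E ∧ Disjoint S I ∧ Disjoint S T ∧ Disjoint I T ∧
    S ∪ I ∪ T = Finset.univ ∧ (∀ s ∈ S, inN E s = ∅) ∧ (∀ t ∈ T, outN E t = ∅)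

/-- There is a directed path from `i` to `j` all of whose internal vertices
lie in `X` (the single-edge path has no internal vertices). -/
def PathThrough (E : Finset (V × V)) (X : Finset V) (i j : V) : Prop :=
  ∃ l : List V, (∀ v ∈ l, v ∈ X) ∧ List.Chain' (fun a b => (a, b) ∈ E) (i :: (l ++ [j]))

lemma add_mul_sub_one_mul_le {a b : ℕ} (ha : a ≤ b + 1) (hb : 0 < b) (c : ℕ) :
    a * c + (b - 1) * c ≤ 2 * (b * c) := by
  rw [← add_mul, ← mul_assoc]
  exact Nat.mul_le_mul_right c (by omega)

section

variable {α : Type*}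

lemma Acyclic.not_mem_self {E : Finset (α × α)} (h : Acyclic E) (a : α) : (a, a) ∉ E :=
  fun ha => h a (.single ha)

lemma Acyclic.not_mem_swap {E : Finset (α × α)} (h : Acyclic E) {a b : α}
    (hab : (a, b) ∈ E) : (b, a) ∉ E :=
  fun hba => h a (.tail (.single hab) hba)

lemma Acyclic.ne_of_mem {E : Finset (α × α)} (h : Acyclic E) {a b : α}
    (hab : (a, b) ∈ E) : a ≠ b := by
  rintro rfl
  exact h.not_mem_self a hab

variable [DecidableEq α]

lemma mem_inN {E : Finset (α × α)} {a v : α} : a ∈ inN E v ↔ (a, v) ∈ E := by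
  simp [inN]

lemma mem_outN {E : Finset (α × α)} {b v : α} : b ∈ outN E v ↔ (v, b) ∈ E := by
  simp [outN]

lemma mem_elimv {E : Finset (α × α)} {v a b : α} :
    (a, b) ∈ elimv E v ↔ ((a, b) ∈ E ∨ (a, v) ∈ E ∧ (v, b) ∈ E) ∧ a ≠ v ∧ b ≠ v := by
  simp only [elimv, Finset.mem_filter, Finset.mem_union, Finset.mem_product, mem_inN, mem_outN]

lemma elimv_comm (E : Finset (α × α)) (x y : α) :
    elimv (elimv E x) y = elimv (elimv E y) x := by
  rcases eq_or_ne x y with rfl | hxy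
  · rfl
  ext ⟨a, b⟩
  simp only [mem_elimv]
  have := hxy.symm
  tauto

lemma elimSeq_cons (E : Finset (α × α)) (w : α) (t : List α) :
    elimSeq E (w :: t) = elimSeq (elimv E w) t := rfl

lemma cost_append (E : Finset (α × α)) (s t : List α) :
    cost E (s ++ t) = cost E s + cost (elimSeq E s) t := by
  induction s generalizing E with
  | nil => simp [cost, elimSeq]
  | cons w s ih => simp only [List.cons_append, cost, ih, elimSeq_cons, Nat.add_assoc]

lemma transGen_of_transGen_elimv {E : Finset (α × α)} {w a b : α}
    (h : Relation.TransGen (fun x y => (x, y) ∈ elimv E w) a b) :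
    Relation.TransGen (fun x y => (x, y) ∈ E) a b := by
  refine Relation.TransGen.trans_induction_on h (fun hxy => ?_) (fun _ _ => .trans)
  rcases (mem_elimv.mp hxy).1 with hxy | ⟨hxw, hwy⟩
  · exact .single hxy
  · exact .tail (.single hxw) hwy

lemma Acyclic.elimv {E : Finset (α × α)} (h : Acyclic E) (w : α) : Acyclic (elimv E w) :=
  fun v hv => h v (transGen_of_transGen_elimv hv)

lemma Acyclic.elimSeq {E : Finset (α × α)} (h : Acyclic E) (σ : List α) :
    Acyclic (elimSeq E σ) := by
  induction σ generalizing E with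
  | nil => exact h
  | cons w σ ih => exact ih (h.elimv w)

lemma inN_elimv_of_not_mem {E : Finset (α × α)} {u w : α} (hwu : w ≠ u) (huw : (u, w) ∉ E) :
    inN (elimv E u) w = inN E w := by
  ext a
  simp only [mem_inN, mem_elimv, huw, and_false, or_false, hwu, ne_eq, not_false_eq_true,
    and_true, and_iff_left_iff_imp]
  rintro hau rfl
  exact huw hau

lemma outN_elimv_of_not_mem {E : Finset (α × α)} {u w : α} (hwu : w ≠ u) (hwu' : (w, u) ∉ E) :
    outN (elimv E u) w = outN E w := by
  ext b
  simp only [mem_outN, mem_elimv, hwu', false_and, or_false, hwu, ne_eq, not_false_eq_true,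
    true_and, and_iff_left_iff_imp]
  rintro hwb rfl
  exact hwu' hwb

lemma card_inN_le_card_inN_elimv_add_one (E : Finset (α × α)) {u w : α} (hwu : w ≠ u) :
    (inN E w).card ≤ (inN (elimv E u) w).card + 1 := by
  refine (Finset.card_le_card fun a ha => ?_).trans (Finset.card_insert_le u _)
  rcases eq_or_ne a u with rfl | hau
  · exact Finset.mem_insert_self _ _
  · exact Finset.mem_insert_of_mem (mem_inN.mpr (mem_elimv.mpr ⟨.inl (mem_inN.mp ha), hau, hwu⟩))

lemma card_outN_le_card_outN_elimv_add_one (E : Finset (α × α)) {u w : α} (hwu : w ≠ u) :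
    (outN E w).card ≤ (outN (elimv E u) w).card + 1 := by
  refine (Finset.card_le_card fun b hb => ?_).trans (Finset.card_insert_le u _)
  rcases eq_or_ne b u with rfl | hbu
  · exact Finset.mem_insert_self _ _
  · exact Finset.mem_insert_of_mem (mem_outN.mpr (mem_elimv.mpr ⟨.inl (mem_outN.mp hb), hwu, hbu⟩))

def Twins (E : Finset (α × α)) (u v : α) : Prop :=
  inN E u = inN E v ∧ outN E u = outN E v

namespace Twins

variable {E : Finset (α × α)} {u v : α}

lemma mem_left_iff (h : Twins E u v) (a : α) : (a, u) ∈ E ↔ (a, v) ∈ E := by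
  rw [← mem_inN, ← mem_inN, h.1]

lemma mem_right_iff (h : Twins E u v) (b : α) : (u, b) ∈ E ↔ (v, b) ∈ E := by
  rw [← mem_outN, ← mem_outN, h.2]

lemma not_mem (h : Twins E u v) (hE : Acyclic E) : (u, v) ∉ E :=
  fun huv => hE.not_mem_self v ((h.mem_right_iff v).mp huv)

lemma symm (h : Twins E u v) : Twins E v u := ⟨h.1.symm, h.2.symm⟩

lemma elimv_of_ne (h : Twins E u v) {w : α} (hwu : w ≠ u) (hwv : w ≠ v) :
    Twins (elimv E w) u v := by
  constructor <;> ext a <;>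
    simp only [mem_inN, mem_outN, mem_elimv, h.mem_left_iff, h.mem_right_iff, hwu.symm,
      hwv.symm, ne_eq, not_false_eq_true, and_true, true_and]

lemma elimSeq_of_not_mem (h : Twins E u v) {σ : List α} (hu : u ∉ σ) (hv : v ∉ σ) :
    Twins (elimSeq E σ) u v := by
  induction σ generalizing E with
  | nil => exact h
  | cons w σ ih =>
    simp only [List.mem_cons, not_or] at hu hv
    exact ih (h.elimv_of_ne (Ne.symm hu.1) (Ne.symm hv.1)) hu.2 hv.2

lemma mark_elimv (h : Twins E u v) (hE : Acyclic E) (huv : u ≠ v) :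
    mark (elimv E u) v = mark E u := by
  rw [mark, inN_elimv_of_not_mem huv.symm (h.not_mem hE),
    outN_elimv_of_not_mem huv.symm (h.symm.not_mem hE), mark, h.1, h.2]

/-- Once `u` is eliminated, its twin `v` is simplicial: eliminating it creates no fill. -/
lemma elimv_elimv (h : Twins E u v) (hE : Acyclic E) :
    elimv (elimv E u) v = (elimv E u).filter fun p => p.1 ≠ v ∧ p.2 ≠ v := by
  ext ⟨a, b⟩
  simp only [mem_elimv, Finset.mem_filter, and_congr_left_iff, or_iff_left_iff_imp]
  rintro - ⟨⟨hav, -⟩, hvb, -⟩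
  have hau := (h.mem_left_iff a).mpr (hav.resolve_right fun h' => h.not_mem hE h'.2)
  have hub := (h.mem_right_iff b).mpr (hvb.resolve_right fun h' => h.symm.not_mem hE h'.1)
  exact ⟨.inr ⟨hau, hub⟩, hE.ne_of_mem hau, (hE.ne_of_mem hub).symm⟩

lemma inN_elimv_elimv (h : Twins E u v) (hE : Acyclic E) {w : α} (hwv : w ≠ v) :
    inN (elimv (elimv E u) v) w = (inN (elimv E u) w).erase v := by
  ext a
  simp [h.elimv_elimv hE, mem_inN, hwv, and_comm]

lemma outN_elimv_elimv (h : Twins E u v) (hE : Acyclic E) {w : α} (hwv : w ≠ v) :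
    outN (elimv (elimv E u) v) w = (outN (elimv E u) w).erase v := by
  ext b
  simp [h.elimv_elimv hE, mem_outN, hwv, and_comm]

-- If `u` is adjacent to `w`, eliminating `u` lowers that degree of `w` by at most one and
-- eliminating the then simplicial `v` lowers it by exactly one, while the other degree of `w`
-- stays put; otherwise neither degree of `w` grows.
lemma mark_add_mark_elimv_elimv_le (h : Twins E u v) (hE : Acyclic E) (huv : u ≠ v) {w : α}
    (hwu : w ≠ u) (hwv : w ≠ v) :
    mark E w + mark (elimv (elimv E u) v) w ≤ 2 * mark (elimv E u) w := by
  have hE₁ := hE.elimv u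
  rw [mark, mark, mark, h.inN_elimv_elimv hE hwv, h.outN_elimv_elimv hE hwv]
  by_cases huw : (u, w) ∈ E
  · have hv : v ∈ inN (elimv E u) w :=
      mem_inN.mpr (mem_elimv.mpr ⟨.inl ((h.mem_right_iff w).mp huw), huv.symm, hwu⟩)
    have hv' : v ∉ outN (elimv E u) w :=
      fun hv' => hE₁.not_mem_swap (mem_inN.mp hv) (mem_outN.mp hv')
    rw [Finset.erase_eq_of_notMem hv', outN_elimv_of_not_mem hwu (hE.not_mem_swap huw),
      Finset.card_erase_of_mem hv]
    exact add_mul_sub_one_mul_le (card_inN_le_card_inN_elimv_add_one E hwu)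
      (Finset.card_pos.mpr ⟨v, hv⟩) _
  by_cases hwu' : (w, u) ∈ E
  · have hv : v ∈ outN (elimv E u) w :=
      mem_outN.mpr (mem_elimv.mpr ⟨.inl ((h.mem_left_iff w).mp hwu'), hwu, huv.symm⟩)
    have hv' : v ∉ inN (elimv E u) w :=
      fun hv' => hE₁.not_mem_swap (mem_inN.mp hv') (mem_outN.mp hv)
    rw [Finset.erase_eq_of_notMem hv', inN_elimv_of_not_mem hwu huw,
      Finset.card_erase_of_mem hv]
    simpa only [mul_comm] using add_mul_sub_one_mul_le
      (card_outN_le_card_outN_elimv_add_one E hwu) (Finset.card_pos.mpr ⟨v, hv⟩) _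
  rw [inN_elimv_of_not_mem hwu huw, outN_elimv_of_not_mem hwu hwu']
  have := Nat.mul_le_mul (Finset.card_erase_le (s := inN E w) (a := v))
    (Finset.card_erase_le (s := outN E w) (a := v))
  omega

lemma cost_cons_cons (h : Twins E u v) (hE : Acyclic E) (huv : u ≠ v) (l : List α) :
    cost E (u :: v :: l) = 2 * mark E u + cost (elimv (elimv E u) v) l := by
  rw [cost, cost, h.mark_elimv hE huv]
  ring

lemma cost_exchange_le (h : Twins E u v) (hE : Acyclic E) (huv : u ≠ v) {m : List α}
    (hum : u ∉ m) (hvm : v ∉ m) (r : List α) :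
    cost E (u :: v :: (m ++ r)) + cost E (m ++ u :: v :: r) ≤
      2 * cost E (u :: (m ++ v :: r)) := by
  induction m generalizing E with
  | nil => simp only [List.nil_append]; omega
  | cons w m ih =>
    simp only [List.mem_cons, not_or] at hum hvm
    have hw := h.elimv_of_ne (Ne.symm hum.1) (Ne.symm hvm.1)
    have IH := ih hw (hE.elimv w) hum.2 hvm.2
    rw [hw.cost_cons_cons (hE.elimv w) huv, cost, elimv_comm E w u,
      elimv_comm (elimv E u) w v] at IH
    simp only [List.cons_append]
    rw [h.cost_cons_cons hE huv, cost, cost, cost, cost]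
    have := h.mark_add_mark_elimv_elimv_le hE huv (Ne.symm hum.1) (Ne.symm hvm.1)
    omega

end Twins

lemma Twins.cost_append_exchange_le {E : Finset (α × α)} {u v : α} (h : Twins E u v)
    (hE : Acyclic E) {a m r : List α} (hnd : (a ++ u :: (m ++ v :: r)).Nodup) :
    cost E (a ++ u :: v :: (m ++ r)) + cost E (a ++ (m ++ u :: v :: r)) ≤
      2 * cost E (a ++ u :: (m ++ v :: r)) := by
  obtain ⟨hua, hva, huv, hum, hvm⟩ : u ∉ a ∧ v ∉ a ∧ u ≠ v ∧ u ∉ m ∧ v ∉ m := by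
    simp only [List.nodup_append, List.nodup_cons, List.mem_append, List.mem_cons,
      not_or] at hnd
    grind
  rw [cost_append E a, cost_append E a, cost_append E a]
  have := (h.elimSeq_of_not_mem hua hva).cost_exchange_le (hE.elimSeq a) huv hum hvm r
  omega

-- The sum of the (0-based) indices of the entries of the list that lie in `X`.
def positionSum (X : Finset α) : List α → ℕ
  | [] => 0
  | _ :: l => l.countP (· ∈ X) + positionSum X l

lemma positionSum_cons_append_add_length {X : Finset α} {v : α} (hv : v ∈ X) {m : List α}
    (hm : ∀ w ∈ m, w ∉ X) (r : List α) :
    positionSum X (v :: (m ++ r)) + m.length = positionSum X (m ++ v :: r) := by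
  induction m with
  | nil => simp
  | cons w m ih =>
    simp only [List.mem_cons, forall_eq_or_imp] at hm
    simp only [List.cons_append, positionSum, ← ih hm.2]
    simp [List.countP_append, hm.1, hv]
    omega

lemma positionSum_append_cons_append_lt {X : Finset α} {v : α} (hv : v ∈ X) {m : List α}
    (hm : m ≠ []) (hmX : ∀ w ∈ m, w ∉ X) (p r : List α) :
    positionSum X (p ++ v :: (m ++ r)) < positionSum X (p ++ (m ++ v :: r)) := by
  induction p with
  | nil =>
    have := positionSum_cons_append_add_length hv hmX r
    have := List.length_pos_iff.mpr hm
    simp only [List.nil_append]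
    omega
  | cons w p ih =>
    simp only [List.cons_append, positionSum, (List.perm_middle.symm.append_left p).countP_eq]
    omega

lemma Twins.cost_pull_le {E : Finset (α × α)} {u v : α} (h : Twins E u v) (hE : Acyclic E)
    {a m r : List α} (hnd : (a ++ u :: (m ++ v :: r)).Nodup)
    (hopt : ∀ τ, τ.Perm (a ++ u :: (m ++ v :: r)) →
      cost E (a ++ u :: (m ++ v :: r)) ≤ cost E τ) :
    cost E (a ++ u :: v :: (m ++ r)) ≤ cost E (a ++ u :: (m ++ v :: r)) := by
  have := h.cost_append_exchange_le hE hnd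
  have := hopt _ (List.perm_middle.append_left a)
  omega

lemma exists_block_or_gap (X : Finset α) (σ : List α) :
    (∃ a ρ r, σ = a ++ ρ ++ r ∧ (∀ x ∈ a ++ r, x ∉ X) ∧ ∀ x ∈ ρ, x ∈ X) ∨
      ∃ a u m v r, σ = a ++ u :: (m ++ v :: r) ∧ u ∈ X ∧ v ∈ X ∧ m ≠ [] ∧ ∀ w ∈ m, w ∉ X := by
  induction σ with
  | nil => exact .inl ⟨[], [], [], rfl, by simp, by simp⟩
  | cons w σ ih =>
    rcases ih with ⟨a, ρ, r, rfl, har, hρ⟩ | ⟨a, u, m, v, r, rfl, hu, hv, hm, hmX⟩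
    swap
    · exact .inr ⟨w :: a, u, m, v, r, rfl, hu, hv, hm, hmX⟩
    by_cases hw : w ∈ X
    swap
    · exact .inl ⟨w :: a, ρ, r, rfl, by simpa [hw] using har, hρ⟩
    rcases a with _ | ⟨b, a⟩
    · exact .inl ⟨[], w :: ρ, r, rfl, har, by simpa [hw] using hρ⟩
    rcases ρ with _ | ⟨p, ρ⟩
    · exact .inl ⟨[], [w], b :: a ++ r, by simp, by simpa using har, by simpa using hw⟩
    · refine .inr ⟨[], w, b :: a, p, ρ ++ r, by simp, hw, hρ p (by simp), by simp, ?_⟩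
      exact fun x hx => har x (List.mem_append_left _ hx)

lemma List.perm_toList_iff {s : Finset α} {l : List α} :
    l.Perm s.toList ↔ l.Nodup ∧ l.toFinset = s := by
  refine ⟨fun h => ⟨h.nodup_iff.mpr s.nodup_toList, ?_⟩, fun ⟨hl, hs⟩ => ?_⟩
  · rw [List.toFinset_eq_of_perm _ _ h, Finset.toList_toFinset]
  · exact hs ▸ (List.toFinset_toList hl).symm

lemma toFinset_eq_of_block {X : Finset α} {a ρ r : List α} (hX : X ⊆ (a ++ ρ ++ r).toFinset)
    (har : ∀ x ∈ a ++ r, x ∉ X) (hρ : ∀ x ∈ ρ, x ∈ X) : ρ.toFinset = X := by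
  ext x
  refine ⟨fun hx => hρ x (List.mem_toFinset.mp hx), fun hx => ?_⟩
  have hxσ := List.mem_toFinset.mp (hX hx)
  have hxar := mt (har x) (not_not_intro hx)
  simp only [List.mem_append, List.mem_toFinset] at hxσ hxar ⊢
  tauto

end

/-- if `X ⊆ I` is a set of pairwise false twins, then some
minimum-cost total elimination sequence eliminates the vertices of `X`
consecutively. -/
theorem false_twins_consecutive (E : Finset (V × V)) (S I T : Finset V)
    (hD : IsDAGPartition E S I T) (X : Finset V) (hX : X ⊆ I)
    (htwin : ∀ u ∈ X, ∀ v ∈ X, inN E u = inN E v ∧ outN E u = outN E v) :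
    ∃ σ : List V, σ.Nodup ∧ σ.toFinset = I ∧
      (∀ τ : List V, τ.Nodup → τ.toFinset = I → cost E σ ≤ cost E τ) ∧
      ∃ σ₁ ρ σ₂ : List V, σ = σ₁ ++ ρ ++ σ₂ ∧ ρ.toFinset = X := by
  obtain ⟨σ, hσ, hmin⟩ := I.toList.permutations.toFinset.exists_min_image
    (fun σ => toLex (cost E σ, positionSum X σ)) ⟨I.toList, by simp⟩
  simp only [List.mem_toFinset, List.mem_permutations] at hσ hmin
  obtain ⟨hnd, hσI⟩ := List.perm_toList_iff.mp hσ
  have hle (τ) (hτ : τ.Perm σ) :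
      toLex (cost E σ, positionSum X σ) ≤ toLex (cost E τ, positionSum X τ) :=
    hmin τ (hτ.trans hσ)
  refine ⟨σ, hnd, hσI, fun τ hτ hτI => ?_, ?_⟩
  · exact (Prod.Lex.toLex_le_toLex'.mp
      (hle τ ((List.perm_toList_iff.mpr ⟨hτ, hτI⟩).trans hσ.symm))).1
  rcases exists_block_or_gap X σ with
    ⟨a, ρ, r, rfl, har, hρ⟩ | ⟨a, u, m, v, r, rfl, hu, hv, hm, hmX⟩
  · exact ⟨a, ρ, r, rfl, toFinset_eq_of_block (hσI ▸ hX) har hρ⟩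
  exfalso
  have hpull : (a ++ u :: v :: (m ++ r)).Perm (a ++ u :: (m ++ v :: r)) :=
    (List.perm_middle.cons u).symm.append_left a
  have hcost := Twins.cost_pull_le (htwin u hu v hv) hD.1 hnd
    fun τ hτ => (Prod.Lex.toLex_le_toLex'.mp (hle τ hτ)).1
  have hpos := positionSum_append_cons_append_lt hv hm hmX (a ++ [u]) r
  simp only [List.append_assoc, List.singleton_append] at hpos
  exact not_le.mpr (Prod.Lex.toLex_lt_toLex'.mpr ⟨hcost, fun _ => hpos⟩) (hle _ hpull)
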